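/- If Z_1, Z_2, Z_3, Z_4 are centered jointly Gaussian real random variables with covariances σ_{i,j} = E[Z_i Z_j], then E[Z_1 Z_2 Z_3 Z_4] = σ_{1,2}σ_{3,4} + σ_{1,3}σ_{2,4} + σ_{2,3}σ_{1,4}. -/

import Mathlib

/-!
Every linear combination `S a = ∑ aᵢ Zᵢ` is a centered Gaussian, so `E[S a ^ 4] = 3 E[S a ^ 2] ^ 2`
(the fourth moment of `N(0, v)` is `3 v²`, read off the fourth derivative at `0` of its moment
generating function `exp (v t² / 2)`). Both sides are polynomials in `a`: the left one is the
quartic form `∑ aᵢaⱼaₖaₗ E[ZᵢZⱼZₖZₗ]`, the right one is `3 (∑ aᵢaⱼ σᵢⱼ)²`. Comparing the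
coefficients of `a₀a₁a₂a₃`, extracted by a signed sum over `a = (1, ±1, ±1, ±1)`, gives the
formula. As the signed sum is taken pointwise before integrating, only the powers `S a ^ 4` and
the products `ZᵢZⱼ` need to be integrable.
-/

open MeasureTheory ProbabilityTheory Finset Real Polynomial
open scoped NNReal

namespace ProbabilityTheory

noncomputable def gaussianMomentPoly (v : ℝ) : ℕ → ℝ[X]
  | 0 => 1
  | n + 1 => derivative (gaussianMomentPoly v n) + C v * X * gaussianMomentPoly v n

lemma iteratedDeriv_exp_mul_sq_div_two (v : ℝ) (n : ℕ) :
    iteratedDeriv n (fun t ↦ rexp (v * t ^ 2 / 2))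
      = fun t ↦ (gaussianMomentPoly v n).eval t * rexp (v * t ^ 2 / 2) := by
  induction n with
  | zero => simp [gaussianMomentPoly]
  | succ n ih =>
    rw [iteratedDeriv_succ, ih]
    funext t
    have hexp : HasDerivAt (fun t ↦ rexp (v * t ^ 2 / 2)) (v * t * rexp (v * t ^ 2 / 2)) t := by
      convert (((hasDerivAt_pow 2 t).const_mul v).div_const 2).exp using 1
      push_cast
      ring
    rw [((gaussianMomentPoly v n).hasDerivAt t |>.fun_mul hexp).deriv, gaussianMomentPoly]
    simp only [eval_add, eval_mul, eval_C, eval_X]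
    ring

lemma integral_pow_gaussianReal (v : ℝ≥0) (n : ℕ) :
    ∫ x, x ^ n ∂gaussianReal 0 v = (gaussianMomentPoly v n).eval 0 := by
  have hmgf : mgf (fun x ↦ x) (gaussianReal 0 v) = fun t ↦ rexp (v * t ^ 2 / 2) := by
    simp [mgf_fun_id_gaussianReal]
  have h := iteratedDeriv_mgf_zero (X := fun x ↦ x) (μ := gaussianReal 0 v) (by simp) n
  rw [hmgf, iteratedDeriv_exp_mul_sq_div_two] at h
  simpa using h.symm

lemma integral_sq_gaussianReal (v : ℝ≥0) : ∫ x, x ^ 2 ∂gaussianReal 0 v = v := by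
  simp [integral_pow_gaussianReal, gaussianMomentPoly]

lemma integral_pow_four_gaussianReal (v : ℝ≥0) : ∫ x, x ^ 4 ∂gaussianReal 0 v = 3 * v ^ 2 := by
  simp only [integral_pow_gaussianReal, gaussianMomentPoly, derivative_add, derivative_mul,
    derivative_one, derivative_C, derivative_X, derivative_zero, eval_add, eval_mul, eval_C,
    eval_X, eval_zero, eval_one]
  ring

namespace HasLaw

variable {Ω : Type*} [MeasurableSpace Ω] {P : Measure Ω} {Y : Ω → ℝ} {v : ℝ≥0}

lemma integral_pow_four_eq_three_mul_sq (hY : HasLaw Y (gaussianReal 0 v) P) :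
    ∫ ω, Y ω ^ 4 ∂P = 3 * (∫ ω, Y ω ^ 2 ∂P) ^ 2 := by
  rw [← Function.comp_def (fun x ↦ x ^ 4), hY.integral_comp (by fun_prop),
    ← Function.comp_def (fun x ↦ x ^ 2), hY.integral_comp (by fun_prop),
    integral_pow_four_gaussianReal, integral_sq_gaussianReal]

lemma integrable_pow_gaussianReal (hY : HasLaw Y (gaussianReal 0 v) P) (n : ℕ) :
    Integrable (fun ω ↦ Y ω ^ n) P := by
  have := hY.isProbabilityMeasure
  have hn : MemLp Y n P := hY.hasGaussianLaw.memLp (by simp)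
  refine (integrable_norm_iff (hY.aemeasurable.pow_const n).aestronglyMeasurable).1 ?_
  simpa only [norm_pow] using hn.integrable_norm_pow'

end HasLaw

end ProbabilityTheory

lemma integral_sq_sum_mul {ι Ω : Type*} [Fintype ι] [MeasurableSpace Ω] {P : Measure Ω}
    {Z : ι → Ω → ℝ} (hZ : ∀ i, MemLp (Z i) 2 P) (a : ι → ℝ) :
    ∫ ω, (∑ i, a i * Z i ω) ^ 2 ∂P = ∑ i, ∑ j, a i * a j * ∫ ω, Z i ω * Z j ω ∂P := by
  have hint : ∀ i j, Integrable (fun ω ↦ a i * a j * (Z i ω * Z j ω)) P := fun i j ↦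
    ((hZ i).integrable_mul (hZ j)).const_mul _
  have hexpand : ∀ ω, (∑ i, a i * Z i ω) ^ 2 = ∑ i, ∑ j, a i * a j * (Z i ω * Z j ω) := by
    intro ω
    rw [sq, sum_mul_sum]
    exact sum_congr rfl fun i _ ↦ sum_congr rfl fun j _ ↦ by ring
  simp_rw [hexpand]
  rw [integral_finsetSum _ fun i _ ↦ integrable_finsetSum _ fun j _ ↦ hint i j]
  refine sum_congr rfl fun i _ ↦ ?_
  rw [integral_finsetSum _ fun j _ ↦ hint i j]
  exact sum_congr rfl fun j _ ↦ integral_const_mul _ _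

/-- For a quartic polynomial `f` this is `8` times its coefficient of `a₀a₁a₂a₃`: every other
monomial has an even exponent in some `aᵢ` with `i ≥ 1`, and cancels. -/
noncomputable def polarization (f : (Fin 4 → ℝ) → ℝ) : ℝ :=
  ∑ e ∈ ({1, -1} : Finset ℝ) ×ˢ ({1, -1} : Finset ℝ) ×ˢ ({1, -1} : Finset ℝ),
    e.1 * e.2.1 * e.2.2 * f ![1, e.1, e.2.1, e.2.2]

lemma polarization_pow_four (x : Fin 4 → ℝ) :
    polarization (fun a ↦ (∑ i, a i * x i) ^ 4) = 192 * (x 0 * x 1 * x 2 * x 3) := by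
  simp only [polarization, sum_product, sum_pair (show (1 : ℝ) ≠ -1 by norm_num),
    Fin.sum_univ_four, Matrix.cons_val_zero, Matrix.cons_val_one, Matrix.cons_val]
  ring

lemma polarization_three_mul_sq (σ : Fin 4 → Fin 4 → ℝ) (hσ : ∀ i j, σ i j = σ j i) :
    polarization (fun a ↦ 3 * (∑ i, ∑ j, a i * a j * σ i j) ^ 2)
      = 192 * (σ 0 1 * σ 2 3 + σ 0 2 * σ 1 3 + σ 1 2 * σ 0 3) := by
  simp only [polarization, sum_product, sum_pair (show (1 : ℝ) ≠ -1 by norm_num),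
    Fin.sum_univ_four, Matrix.cons_val_zero, Matrix.cons_val_one, Matrix.cons_val]
  rw [hσ 1 0, hσ 2 0, hσ 3 0, hσ 2 1, hσ 3 1, hσ 3 2]
  ring

lemma integral_polarization {Ω : Type*} [MeasurableSpace Ω] {P : Measure Ω}
    {F : (Fin 4 → ℝ) → Ω → ℝ} (hF : ∀ a, Integrable (F a) P) :
    ∫ ω, polarization (fun a ↦ F a ω) ∂P = polarization fun a ↦ ∫ ω, F a ω ∂P := by
  simp only [polarization]
  rw [integral_finsetSum _ fun e _ ↦ (hF _).const_mul _]
  exact sum_congr rfl fun e _ ↦ integral_const_mul _ _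

theorem stmt12_general {Ω : Type*} [MeasureSpace Ω]
    (Z : Fin 4 → Ω → ℝ)
    -- jointly Gaussian and centered: every linear combination is a centered Gaussian
    (hGauss : ∀ a : Fin 4 → ℝ, ∃ v : NNReal,
      Measure.map (fun ω => ∑ i, a i * Z i ω) (volume : Measure Ω) = gaussianReal 0 v) :
    (∫ ω, Z 0 ω * Z 1 ω * Z 2 ω * Z 3 ω)
      = (∫ ω, Z 0 ω * Z 1 ω) * (∫ ω, Z 2 ω * Z 3 ω)
        + (∫ ω, Z 0 ω * Z 2 ω) * (∫ ω, Z 1 ω * Z 3 ω)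
        + (∫ ω, Z 1 ω * Z 2 ω) * (∫ ω, Z 0 ω * Z 3 ω) := by
  have hlaw : ∀ a : Fin 4 → ℝ, ∃ v : ℝ≥0, HasLaw (fun ω ↦ ∑ i, a i * Z i ω) (gaussianReal 0 v) :=
    fun a ↦ let ⟨v, hv⟩ := hGauss a
      ⟨v, aemeasurable_of_map_neZero (by rw [hv]; infer_instance), hv⟩
  have hL2 : ∀ i, MemLp (Z i) 2 := fun i ↦ by
    obtain ⟨v, hv⟩ := hlaw (Pi.single i 1)
    simpa [Pi.single_apply] using hv.hasGaussianLaw.memLp_two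
  have hint : ∀ a : Fin 4 → ℝ, Integrable fun ω ↦ (∑ i, a i * Z i ω) ^ 4 := fun a ↦
    (hlaw a).choose_spec.integrable_pow_gaussianReal 4
  have hmoment : ∀ a : Fin 4 → ℝ, ∫ ω, (∑ i, a i * Z i ω) ^ 4
      = 3 * (∑ i, ∑ j, a i * a j * ∫ ω, Z i ω * Z j ω) ^ 2 := fun a ↦ by
    obtain ⟨v, hv⟩ := hlaw a
    rw [hv.integral_pow_four_eq_three_mul_sq, integral_sq_sum_mul hL2]
  calc ∫ ω, Z 0 ω * Z 1 ω * Z 2 ω * Z 3 ω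
      = (∫ ω, polarization fun a ↦ (∑ i, a i * Z i ω) ^ 4) / 192 := by
        simp_rw [polarization_pow_four, integral_const_mul]
        ring
    _ = polarization (fun a ↦ 3 * (∑ i, ∑ j, a i * a j * ∫ ω, Z i ω * Z j ω) ^ 2) / 192 := by
        rw [integral_polarization hint]
        simp_rw [hmoment]
    _ = _ := by
        have hσ : ∀ i j, ∫ ω, Z i ω * Z j ω = ∫ ω, Z j ω * Z i ω := fun i j ↦
          integral_congr_ae (.of_forall fun ω ↦ mul_comm _ _)
        rw [polarization_three_mul_sq _ hσ]
        ring

/-- Isserlis/Wick: for centered jointly Gaussian `Z₁,…,Z₄` with covariances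
`σ_{i,j} = E[Z_i Z_j]`, one has `E[Z₁Z₂Z₃Z₄] = σ₁₂σ₃₄ + σ₁₃σ₂₄ + σ₂₃σ₁₄`. -/
theorem stmt12 {Ω : Type*} [MeasureSpace Ω] [IsProbabilityMeasure (volume : Measure Ω)]
    (Z : Fin 4 → Ω → ℝ)
    (hmeas : ∀ i, Measurable (Z i))
    -- jointly Gaussian and centered: every linear combination is a centered Gaussian
    (hGauss : ∀ a : Fin 4 → ℝ, ∃ v : NNReal,
      Measure.map (fun ω => ∑ i, a i * Z i ω) (volume : Measure Ω) = gaussianReal 0 v) :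
    (∫ ω, Z 0 ω * Z 1 ω * Z 2 ω * Z 3 ω)
      = (∫ ω, Z 0 ω * Z 1 ω) * (∫ ω, Z 2 ω * Z 3 ω)
        + (∫ ω, Z 0 ω * Z 2 ω) * (∫ ω, Z 1 ω * Z 3 ω)
        + (∫ ω, Z 1 ω * Z 2 ω) * (∫ ω, Z 0 ω * Z 3 ω) :=
  stmt12_general Z hGauss
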